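/- Let m ≥ 1, let β_0, …, β_{m−1} be a basis of F_{2^m} over F_2, let ι : F_2 → F_{2^m} be the canonical inclusion (0 ↦ 0, 1 ↦ 1), and let j be a nonnegative integer. Define g : F_2^m → F_{2^m} by g(X_0, …, X_{m−1}) = (Σ_{s=0}^{m−1} ι(X_s) β_s)^j. Then g lies in the F_{2^m}-linear span of the monomial functions (X_0, …, X_{m−1}) ↦ ∏_{s ∈ E} ι(X_s), where E ranges over the subsets of {0, …, m−1} with |E| ≤ wt(j); that is, the j-th power function, expressed in the coordinates of the basis, is an F_{2^m}-linear combination of multilinear monomials of degree at most wt(j). -/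

import Mathlib

/-- The binary weight `wt j`: the number of ones in the binary expansion of `j`. -/
def wt (j : ℕ) : ℕ := (Nat.digits 2 j).sum

/-!
Write `ι : ZMod 2 → K` for the inclusion. Since `ι(x)² = ι(x)`, the products `∏_{s ∈ E} ι(X_s)`
multiply by taking unions of index sets, so the span `D k` of those with `|E| ≤ k` satisfies
`D a * D b ≤ D (a + b)`; in characteristic 2 squaring is additive and hence also maps `D k`
into itself. The linear form `∑_s ι(X_s) β_s` lies in `D 1`, and square-and-multiply along the
binary expansion of `j` puts its `j`-th power in `D (wt j)`: squaring keeps the degree and each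
binary digit `1` costs one multiplication by the linear form.
-/

open Submodule

theorem Finset.prod_mul_prod_of_isIdempotentElem {ι M : Type*} [CommMonoid M] [DecidableEq ι]
    {f : ι → M} (hf : ∀ i, IsIdempotentElem (f i)) (s t : Finset ι) :
    (∏ i ∈ s, f i) * ∏ i ∈ t, f i = ∏ i ∈ s ∪ t, f i := by
  have hinter : IsIdempotentElem (∏ i ∈ s ∩ t, f i) :=
    Finset.prod_induction _ IsIdempotentElem (fun _ _ => IsIdempotentElem.mul)
      IsIdempotentElem.one (fun i _ => hf i)
  have hsub : s ∩ t ⊆ s ∪ t := Finset.inter_subset_left.trans Finset.subset_union_left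
  rw [← Finset.prod_union_inter, ← Finset.prod_sdiff hsub, mul_assoc, hinter.eq]

theorem wt_two_mul (n : ℕ) : wt (2 * n) = wt n := by
  rcases Nat.eq_zero_or_pos n with rfl | hn
  · rfl
  · simp [wt, Nat.digits_def' one_lt_two (by omega : 0 < 2 * n)]

theorem wt_two_mul_add_one (n : ℕ) : wt (2 * n + 1) = wt n + 1 := by
  have hmod : (2 * n + 1) % 2 = 1 := by omega
  have hdiv : (2 * n + 1) / 2 = n := by omega
  rw [wt, wt, Nat.digits_def' one_lt_two (by omega), List.sum_cons, hmod, hdiv, add_comm]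

section BoolFunctions

variable {σ K : Type*} [CommRing K] [Algebra (ZMod 2) K]

theorem isIdempotentElem_algebraMap_zmod_two (x : ZMod 2) :
    IsIdempotentElem (algebraMap (ZMod 2) K x) :=
  IsIdempotentElem.map (show x * x = x by fin_cases x <;> rfl) _

variable (K) in
noncomputable def boolMonomial (E : Finset σ) : (σ → ZMod 2) → K :=
  fun X => ∏ s ∈ E, algebraMap (ZMod 2) K (X s)

variable (σ K) in
noncomputable def boolDegreeLE (k : ℕ) : Submodule K ((σ → ZMod 2) → K) :=
  span K {h | ∃ E : Finset σ, E.card ≤ k ∧ h = boolMonomial K E}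

theorem boolMonomial_mul [DecidableEq σ] (E F : Finset σ) :
    boolMonomial K E * boolMonomial K F = boolMonomial K (E ∪ F) := by
  funext X
  exact Finset.prod_mul_prod_of_isIdempotentElem
    (fun s => isIdempotentElem_algebraMap_zmod_two (X s)) E F

theorem boolMonomial_mem_boolDegreeLE {E : Finset σ} {k : ℕ} (hE : E.card ≤ k) :
    boolMonomial K E ∈ boolDegreeLE σ K k :=
  subset_span ⟨E, hE, rfl⟩

theorem boolDegreeLE_mono : Monotone (boolDegreeLE σ K) := fun _ _ hab =>
  span_mono fun _ ⟨E, hE, hh⟩ => ⟨E, hE.trans hab, hh⟩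

theorem one_mem_boolDegreeLE (k : ℕ) : (1 : (σ → ZMod 2) → K) ∈ boolDegreeLE σ K k :=
  boolMonomial_mem_boolDegreeLE (E := ∅) (Nat.zero_le k)

theorem boolDegreeLE_mul_le (a b : ℕ) :
    boolDegreeLE σ K a * boolDegreeLE σ K b ≤ boolDegreeLE σ K (a + b) := by
  classical
  rw [boolDegreeLE, boolDegreeLE, span_mul_span]
  refine span_le.mpr ?_
  rintro _ ⟨_, ⟨E, hE, rfl⟩, _, ⟨F, hF, rfl⟩, rfl⟩
  change boolMonomial K E * boolMonomial K F ∈ boolDegreeLE σ K (a + b)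
  rw [boolMonomial_mul]
  exact boolMonomial_mem_boolDegreeLE ((Finset.card_union_le E F).trans (by omega))

theorem mul_mem_boolDegreeLE {a b : ℕ} {g h : (σ → ZMod 2) → K}
    (hg : g ∈ boolDegreeLE σ K a) (hh : h ∈ boolDegreeLE σ K b) :
    g * h ∈ boolDegreeLE σ K (a + b) :=
  boolDegreeLE_mul_le a b (mul_mem_mul hg hh)

theorem sq_mem_boolDegreeLE {k : ℕ} {g : (σ → ZMod 2) → K} (hg : g ∈ boolDegreeLE σ K k) :
    g ^ 2 ∈ boolDegreeLE σ K k := by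
  classical
  have two_eq_zero : (2 : (σ → ZMod 2) → K) = 0 := by
    rw [← map_ofNat (algebraMap (ZMod 2) ((σ → ZMod 2) → K)) 2]
    exact (algebraMap (ZMod 2) _).map_zero
  induction hg using span_induction with
  | mem _ hE =>
    obtain ⟨E, hE, rfl⟩ := hE
    rw [sq, boolMonomial_mul, Finset.union_self]
    exact boolMonomial_mem_boolDegreeLE hE
  | zero => simp
  | add x y _ _ hx hy =>
    have frobenius_add : (x + y) ^ 2 = x ^ 2 + y ^ 2 := by
      linear_combination (x * y) * two_eq_zero
    rw [frobenius_add]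
    exact add_mem hx hy
  | smul c x _ hx =>
    rw [smul_pow]
    exact smul_mem _ _ hx

theorem pow_mem_boolDegreeLE {k : ℕ} {g : (σ → ZMod 2) → K} (hg : g ∈ boolDegreeLE σ K k)
    (j : ℕ) : g ^ j ∈ boolDegreeLE σ K (k * wt j) := by
  induction j using Nat.evenOddRec with
  | h0 =>
    rw [pow_zero]
    exact one_mem_boolDegreeLE _
  | h_even n ih =>
    rw [pow_mul', wt_two_mul]
    exact sq_mem_boolDegreeLE ih
  | h_odd n ih =>
    rw [pow_succ, pow_mul', wt_two_mul_add_one, mul_add_one]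
    exact mul_mem_boolDegreeLE (sq_mem_boolDegreeLE ih) hg

theorem linearForm_mem_boolDegreeLE_one [Fintype σ] (β : σ → K) :
    (fun X : σ → ZMod 2 => ∑ s, algebraMap (ZMod 2) K (X s) * β s) ∈ boolDegreeLE σ K 1 := by
  have hsum : (fun X : σ → ZMod 2 => ∑ s, algebraMap (ZMod 2) K (X s) * β s) =
      ∑ s, β s • boolMonomial K {s} := by
    funext X
    simp [boolMonomial, Finset.sum_apply, mul_comm]
  rw [hsum]
  exact sum_mem fun s _ =>
    smul_mem _ _ (boolMonomial_mem_boolDegreeLE (Finset.card_singleton s).le)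

end BoolFunctions

theorem power_function_in_span_of_low_degree_monomials_general {m : ℕ}
    (β : Module.Basis (Fin m) (ZMod 2) (GaloisField 2 m)) (j : ℕ) :
    (fun X : Fin m → ZMod 2 =>
        (∑ s : Fin m, algebraMap (ZMod 2) (GaloisField 2 m) (X s) * β s) ^ j) ∈
      Submodule.span (GaloisField 2 m)
        {h : (Fin m → ZMod 2) → GaloisField 2 m |
          ∃ E : Finset (Fin m), E.card ≤ wt j ∧
            h = fun X => ∏ s ∈ E, algebraMap (ZMod 2) (GaloisField 2 m) (X s)} := by
  have h := pow_mem_boolDegreeLE (linearForm_mem_boolDegreeLE_one (K := GaloisField 2 m) β) j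
  rwa [one_mul] at h

/-- Let `β_0, …, β_{m−1}` be a basis of `F_{2^m}` over `F_2` and let
`g(X_0, …, X_{m−1}) = (∑_s ι(X_s)·β_s)^j`, where `ι : F_2 → F_{2^m}` is the canonical
inclusion. Then `g` lies in the `F_{2^m}`-linear span of the multilinear monomial
functions `X ↦ ∏_{s ∈ E} ι(X_s)` over subsets `E ⊆ {0, …, m−1}` with `|E| ≤ wt(j)`. -/
theorem power_function_in_span_of_low_degree_monomials {m : ℕ} (hm : 1 ≤ m)
    (β : Module.Basis (Fin m) (ZMod 2) (GaloisField 2 m)) (j : ℕ) :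
    (fun X : Fin m → ZMod 2 =>
        (∑ s : Fin m, algebraMap (ZMod 2) (GaloisField 2 m) (X s) * β s) ^ j) ∈
      Submodule.span (GaloisField 2 m)
        {h : (Fin m → ZMod 2) → GaloisField 2 m |
          ∃ E : Finset (Fin m), E.card ≤ wt j ∧
            h = fun X => ∏ s ∈ E, algebraMap (ZMod 2) (GaloisField 2 m) (X s)} :=
  power_function_in_span_of_low_degree_monomials_general β j
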